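/- Let G be a graph on at least 3 vertices that is explainable with respect to the exactly-2-relation by a non-negative integer weighted tree with all pairwise leaf distances positive. Then G is complete if and only if G is 2-connected. -/

import Mathlib

open SimpleGraph

noncomputable def treePath {V : Type} (T : SimpleGraph V) (hT : T.IsTree) (x y : V) :
    T.Walk x y := (hT.existsUnique_path x y).choose

/-- The weighted distance between two vertices of a tree: the sum of the weights
`lam` over the edges of the unique path. -/
noncomputable def treeDist {V : Type} (T : SimpleGraph V) (hT : T.IsTree)
    (lam : Sym2 V → ℕ) (x y : V) : ℕ :=
  ((treePath T hT x y).edges.map lam).sum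

/-- A leaf of a tree: a vertex of degree at most one. -/
def IsLeaf {V : Type} (T : SimpleGraph V) (v : V) : Prop :=
  (T.neighborSet v).ncard ≤ 1

/-- `(T, lam)` explains the graph `G` w.r.t. the exactly-`k`-relation, where
`f` identifies the vertices of `G` with the leaves of `T`. -/
def ExplainedBy {α V : Type} (G : SimpleGraph α) (T : SimpleGraph V) (hT : T.IsTree)
    (lam : Sym2 V → ℕ) (f : α → V) (k : ℕ) : Prop :=
  Function.Injective f ∧ (∀ v : V, (∃ a, f a = v) ↔ IsLeaf T v) ∧
    (∀ x y : α, G.Adj x y ↔ treeDist T hT lam (f x) (f y) = k)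

/-- `G` can be explained w.r.t. the exactly-`k`-relation by some finite edge-weighted tree. -/
def Explainable {α : Type} (G : SimpleGraph α) (k : ℕ) : Prop :=
  ∃ (V : Type) (_ : Finite V) (T : SimpleGraph V) (hT : T.IsTree) (lam : Sym2 V → ℕ)
    (f : α → V), ExplainedBy G T hT lam f k

/-- `G` can be explained w.r.t. the exactly-`k`-relation by a tree in which all pairs of
distinct leaves are at positive weighted distance (discrete 0-relation). -/
def ExplainableDiscrete {α : Type} (G : SimpleGraph α) (k : ℕ) : Prop :=
  ∃ (V : Type) (_ : Finite V) (T : SimpleGraph V) (hT : T.IsTree) (lam : Sym2 V → ℕ)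
    (f : α → V), ExplainedBy G T hT lam f k ∧
      ∀ x y : α, x ≠ y → treeDist T hT lam (f x) (f y) ≠ 0

/-- A graph is 2-connected if it is connected, has at least 3 vertices, and stays
connected after removing any single vertex. -/
def TwoConnected {β : Type} (H : SimpleGraph β) : Prop :=
  H.Connected ∧ 3 ≤ Nat.card β ∧ ∀ v : β, (H.induce ({v}ᶜ : Set β)).Connected

/-- A block graph: every 2-connected induced subgraph (in particular every block)
is a clique. -/
def IsBlockGraph {β : Type} (H : SimpleGraph β) : Prop :=
  ∀ S : Set β, TwoConnected (H.induce S) →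
    ∀ x y : S, x ≠ y → (H.induce S).Adj x y

/-!
Medians exist in trees, which gives two facts about weighted leaf distances `d`: the sum
`d(x,y) + d(y,z) + d(x,z)` is even, and for a fixed base point `y` the relation
`d(u,w) < d(u,y) + d(w,y)` is transitive. If a connected graph explained by the
exactly-2-relation is not complete, it has an induced path `x - y - z`. Adjacent leaves are at
distance 2, so parity propagates along walks and all leaf distances are even; with discreteness
every other leaf is at distance at least 2 from `y`, and `d(x,z) = 4 = d(x,y) + d(y,z)`. Every
edge avoiding `y` satisfies the strict relation, hence by transitivity so would `x` and `z` if
they were joined in `G - y`. So `y` is a cut vertex.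
-/

namespace SimpleGraph.Walk

variable {V : Type} {G : SimpleGraph V}

lemma IsPath.append_of_support_inter {u v w : V} {p : G.Walk u v} {q : G.Walk v w}
    (hp : p.IsPath) (hq : q.IsPath) (h : ∀ x ∈ p.support, x ∈ q.support → x = v) :
    (p.append q).IsPath := by
  rw [isPath_def, support_append, List.nodup_append]
  have hq' := q.cons_tail_support.symm ▸ hq.support_nodup
  refine ⟨hp.support_nodup, (List.nodup_cons.1 hq').2, fun x hxp x' hxq hxx' => ?_⟩
  subst hxx'
  exact (List.nodup_cons.1 hq').1 (h x hxp (List.mem_of_mem_tail hxq) ▸ hxq)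

lemma exists_isPath_to_first_mem {S : Set V} {u t : V} (w : G.Walk u t) (ht : t ∈ S) :
    ∃ m ∈ S, ∃ q : G.Walk u m, q.IsPath ∧ ∀ x ∈ q.support, x ∈ S → x = m := by
  classical
  induction w with
  | nil => exact ⟨_, ht, nil, .nil, by simp⟩
  | @cons u u' t hadj w ih =>
    by_cases hu : u ∈ S
    · exact ⟨u, hu, nil, .nil, by simp⟩
    obtain ⟨m, hm, q, -, hqS⟩ := ih ht
    refine ⟨m, hm, (cons hadj q).bypass, bypass_isPath _, fun x hx hxS => ?_⟩
    rcases List.mem_cons.1 (support_bypass_subset_support _ hx) with rfl | hx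
    · exact absurd hxS hu
    · exact hqS x hx hxS

end SimpleGraph.Walk

section TreeDist

variable {V : Type} {T : SimpleGraph V} (hT : T.IsTree) (lam : Sym2 V → ℕ)

local notation "δ" => treeDist T hT lam

lemma treePath_isPath (x y : V) : (treePath T hT x y).IsPath :=
  (hT.existsUnique_path x y).choose_spec.1

lemma treeDist_eq_of_isPath {x y : V} {p : T.Walk x y} (hp : p.IsPath) :
    δ x y = (p.edges.map lam).sum := by
  rw [treeDist, treePath, ← (hT.existsUnique_path x y).choose_spec.2 p hp]

lemma treeDist_self (x : V) : δ x x = 0 := by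
  simp [treeDist_eq_of_isPath hT lam Walk.IsPath.nil]

lemma treeDist_comm (x y : V) : δ x y = δ y x := by
  rw [treeDist_eq_of_isPath hT lam (treePath_isPath hT y x).reverse, Walk.edges_reverse,
    List.map_reverse, List.sum_reverse, treeDist]

lemma treeDist_add_of_isPath_append {x y z : V} (p : T.Walk x y) (q : T.Walk y z)
    (h : (p.append q).IsPath) : δ x y + δ y z = δ x z := by
  rw [treeDist_eq_of_isPath hT lam h.of_append_left,
    treeDist_eq_of_isPath hT lam h.of_append_right, treeDist_eq_of_isPath hT lam h,
    Walk.edges_append, List.map_append, List.sum_append]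

lemma treeDist_add_of_mem_support {x y z : V} {p : T.Walk x z} (hp : p.IsPath)
    (hy : y ∈ p.support) : δ x y + δ y z = δ x z := by
  classical
  exact treeDist_add_of_isPath_append hT lam _ _ ((p.take_spec hy).symm ▸ hp)

lemma exists_median_treeDist (y v u : V) : ∃ m ∈ (treePath T hT y v).support,
    δ y m + δ m v = δ y v ∧ δ y m + δ m u = δ y u ∧ δ v m + δ m u = δ v u := by
  classical
  set P := treePath T hT y v
  have hP : P.IsPath := treePath_isPath hT y v
  obtain ⟨m, hm, q, hq, hqP⟩ :=
    (treePath T hT u y).exists_isPath_to_first_mem (S := {x | x ∈ P.support}) P.start_mem_support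
  have hqP' : ∀ x ∈ q.reverse.support, x ∈ P.support → x = m := fun x hx =>
    hqP x (by simpa using hx)
  refine ⟨m, hm, treeDist_add_of_mem_support hT lam hP hm, ?_, ?_⟩
  · refine treeDist_add_of_isPath_append hT lam (P.takeUntil m hm) q.reverse
      ((hP.takeUntil hm).append_of_support_inter hq.reverse fun x hx hxq => ?_)
    exact hqP' x hxq (P.support_takeUntil_subset_support hm hx)
  · refine treeDist_add_of_isPath_append hT lam (P.dropUntil m hm).reverse q.reverse
      ((hP.dropUntil hm).reverse.append_of_support_inter hq.reverse fun x hx hxq => ?_)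
    rw [Walk.support_reverse, List.mem_reverse] at hx
    exact hqP' x hxq (P.support_dropUntil_subset_support hm hx)

lemma treeDist_le_add (x y z : V) : δ x z ≤ δ x y + δ y z := by
  obtain ⟨m, -, h₁, h₂, h₃⟩ := exists_median_treeDist hT lam y x z
  have := treeDist_comm hT lam x y
  have := treeDist_comm hT lam x m
  omega

lemma even_treeDist_add_add (x y z : V) : Even (δ x y + δ y z + δ x z) := by
  obtain ⟨m, -, h₁, h₂, h₃⟩ := exists_median_treeDist hT lam x y z
  have := treeDist_comm hT lam y m
  exact ⟨δ x m + δ m y + δ m z, by omega⟩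

lemma treeDist_add_or_add_of_mem_treePath {y v m₁ m₂ : V}
    (h₁ : m₁ ∈ (treePath T hT y v).support) (h₂ : m₂ ∈ (treePath T hT y v).support) :
    δ y m₁ + δ m₁ m₂ = δ y m₂ ∨ δ y m₂ + δ m₂ m₁ = δ y m₁ := by
  classical
  set P := treePath T hT y v
  have hP : P.IsPath := treePath_isPath hT y v
  rcases (Walk.mem_support_append_iff _ _).1 ((P.take_spec h₁).symm ▸ h₂) with h | h
  · exact .inr (treeDist_add_of_mem_support hT lam (hP.takeUntil h₁) h)
  · have e₁ := treeDist_add_of_mem_support hT lam (hP.dropUntil h₁) h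
    have e₂ := treeDist_add_of_mem_support hT lam hP h₁
    have e₃ := treeDist_add_of_mem_support hT lam hP h₂
    exact .inl (by omega)

-- The hypotheses say that the medians of `y, u, c` and of `y, c, w` are at positive distance
-- from `y`; both lie on the path from `y` to `c`, and the one nearer to `y` does the same
-- for `u, w`.
lemma treeDist_lt_add_trans {y u c w : V} (huc : δ u c < δ u y + δ c y)
    (hcw : δ c w < δ c y + δ w y) : δ u w < δ u y + δ w y := by
  obtain ⟨m₁, hm₁, a₁, a₂, a₃⟩ := exists_median_treeDist hT lam y c u
  obtain ⟨m₂, hm₂, b₁, b₂, b₃⟩ := exists_median_treeDist hT lam y c w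
  have := treeDist_comm hT lam u c
  have := treeDist_comm hT lam u y
  have := treeDist_comm hT lam c y
  have := treeDist_comm hT lam w y
  have := treeDist_comm hT lam c m₁
  have := treeDist_comm hT lam c m₂
  have := treeDist_comm hT lam u m₁
  have := treeDist_comm hT lam m₁ m₂
  have := treeDist_le_add hT lam u m₁ w
  have := treeDist_le_add hT lam m₁ m₂ w
  rcases treeDist_add_or_add_of_mem_treePath hT lam hm₁ hm₂ with h | h <;> omega

end TreeDist

section ExactlyTwo

variable {V α : Type} {T : SimpleGraph V} (hT : T.IsTree) (lam : Sym2 V → ℕ)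
  {G : SimpleGraph α} {f : α → V}

local notation "δ" => treeDist T hT lam

lemma even_treeDist_of_reachable (hadj : ∀ x y, G.Adj x y ↔ δ (f x) (f y) = 2) {a b : α}
    (h : G.Reachable a b) : Even (δ (f a) (f b)) := by
  rw [reachable_iff_reflTransGen] at h
  induction h using Relation.ReflTransGen.trans_induction_on with
  | refl a => simp [treeDist_self]
  | single hab => exact ⟨1, (hadj _ _).1 hab⟩
  | @trans a b c _ _ ihab ihbc =>
    obtain ⟨k, hk⟩ := even_treeDist_add_add hT lam (f a) (f b) (f c)
    obtain ⟨i, hi⟩ := ihab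
    obtain ⟨j, hj⟩ := ihbc
    exact ⟨k - i - j, by omega⟩

lemma two_le_treeDist (hadj : ∀ x y, G.Adj x y ↔ δ (f x) (f y) = 2)
    (hdisc : ∀ x y, x ≠ y → δ (f x) (f y) ≠ 0) (hconn : G.Connected) {u y : α} (h : u ≠ y) :
    2 ≤ δ (f u) (f y) := by
  obtain ⟨k, hk⟩ := even_treeDist_of_reachable hT lam hadj (hconn u y)
  have := hdisc u y h
  omega

lemma treeDist_lt_add_of_reachable_induce_compl
    (hadj : ∀ x y, G.Adj x y ↔ δ (f x) (f y) = 2) (hdisc : ∀ x y, x ≠ y → δ (f x) (f y) ≠ 0)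
    (hconn : G.Connected) {y : α} {c d : ({y}ᶜ : Set α)} (h : (G.induce {y}ᶜ).Reachable c d) :
    δ (f c) (f d) < δ (f c) (f y) + δ (f d) (f y) := by
  rw [reachable_iff_reflTransGen] at h
  induction h using Relation.ReflTransGen.trans_induction_on with
  | refl c =>
    have := two_le_treeDist hT lam hadj hdisc hconn c.2
    rw [treeDist_self]
    omega
  | @single c d hcd =>
    have := two_le_treeDist hT lam hadj hdisc hconn c.2
    have := two_le_treeDist hT lam hadj hdisc hconn d.2
    rw [(hadj c d).1 hcd]
    omega
  | trans _ _ ih₁ ih₂ => exact treeDist_lt_add_trans hT lam ih₁ ih₂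

lemma not_reachable_induce_compl_of_adj_adj
    (hadj : ∀ x y, G.Adj x y ↔ δ (f x) (f y) = 2) (hdisc : ∀ x y, x ≠ y → δ (f x) (f y) ≠ 0)
    (hconn : G.Connected) {x y z : α} (hxy : G.Adj x y) (hyz : G.Adj y z) (hxz : ¬G.Adj x z)
    (hne : x ≠ z) :
    ¬(G.induce {y}ᶜ).Reachable ⟨x, hxy.ne⟩ ⟨z, hyz.ne'⟩ := by
  intro h
  have hlt := treeDist_lt_add_of_reachable_induce_compl hT lam hadj hdisc hconn h
  have hle := treeDist_le_add hT lam (f x) (f y) (f z)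
  dsimp only at hlt
  rw [treeDist_comm hT lam (f z)] at hlt
  rw [(hadj x y).1 hxy, (hadj y z).1 hyz] at hlt hle
  obtain ⟨k, hk⟩ := even_treeDist_of_reachable hT lam hadj (hconn x z)
  have := hdisc x z hne
  have := (hadj x z).not.1 hxz
  omega

end ExactlyTwo

lemma twoConnected_of_forall_adj {β : Type} {H : SimpleGraph β}
    (h : ∀ x y : β, x ≠ y → H.Adj x y) (hcard : 3 ≤ Nat.card β) : TwoConnected H := by
  obtain rfl : H = ⊤ := by ext x y; exact ⟨Adj.ne, h x y⟩
  have : Finite β := (Nat.card_pos_iff.1 (by omega)).2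
  have : Nontrivial β := Finite.one_lt_card_iff_nontrivial.1 (by omega)
  refine ⟨connected_top, hcard, fun v => ?_⟩
  obtain ⟨u, hu⟩ := exists_ne v
  have : Nonempty ({v}ᶜ : Set β) := ⟨⟨u, hu⟩⟩
  rw [induce_top]
  exact connected_top

/-- A graph on at least 3 vertices which is explainable w.r.t. the exactly-2-relation
with all pairwise leaf distances positive is complete iff it is 2-connected. -/
theorem stmt16 {α : Type} [Fintype α] (G : SimpleGraph α)
    (hcard : 3 ≤ Fintype.card α) (hG : ExplainableDiscrete G 2) :
    (∀ x y : α, x ≠ y → G.Adj x y) ↔ TwoConnected G := by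
  refine ⟨fun h => twoConnected_of_forall_adj h (by rwa [Nat.card_eq_fintype_card]), ?_⟩
  rintro ⟨hconn, -, hdel⟩
  by_contra! ⟨a, b, hab, hnadj⟩
  obtain ⟨p, hp⟩ := hconn.exists_path_of_dist a b
  obtain ⟨x, y, z, hxy, hyz, hxz, hne⟩ :=
    p.exists_adj_adj_not_adj_ne hp.2 (hconn.one_lt_dist_of_ne_of_not_adj hab hnadj)
  obtain ⟨V, -, T, hT, lam, f, ⟨-, -, hadj⟩, hdisc⟩ := hG
  exact not_reachable_induce_compl_of_adj_adj hT lam hadj hdisc hconn hxy hyz hxz hne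
    ((hdel y).preconnected _ _)
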